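/- Let g > 0, h⁰ > 0, σ ∈ (0, 1/2) with h⁰ < min(2/(3(1+σ)), 1/((32 C♯)² g)) for a constant C♯ > 0, and suppose m satisfies the largeness condition m ≥ (8C*/g)(|ln(h⁰/2)| + 3σ|ln((1-σ)h⁰/2)|) and is further enlarged as needed. If h : [0, ∞) → (0, ∞) is Lipschitz with h(0) = h⁰, |h'| ≤ 2√(g h⁰) a.e., and h'(t) ≤ -gt/2 + C♯ g h⁰ + (C*/m)∫₀ᵗ|ln h(s)|ds whenever h ≤ 1 on [0,t], then the sequence defined by t₀ = (1/4)√(h⁰/g), t_{n+1} = t_n + σ h(t_n)/(2√(g h⁰)) is well-defined and satisfies (1-σ)ⁿ h⁰/2 ≤ h(t_n) ≤ (1 - σ²/32)ⁿ (3/2) h⁰ for all n ≥ 0. -/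

import Mathlib

set_option maxHeartbeats 1600000 in
theorem geometric_bounds_on_gap (g h0 σ Csharp Cstar : ℝ)
    (hg : 0 < g) (hh0 : 0 < h0) (hσ : σ ∈ Set.Ioo (0 : ℝ) (1 / 2))
    (hCsharp : 0 < Csharp) (hCstar : 0 < Cstar)
    (hsmall : h0 < min (2 / (3 * (1 + σ))) (1 / ((32 * Csharp) ^ 2 * g))) :
    ∃ M : ℝ, ∀ m : ℝ,
      M ≤ m →
      (8 * Cstar / g) * (|Real.log (h0 / 2)| + 3 * σ * |Real.log ((1 - σ) * h0 / 2)|) ≤ m →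
      ∀ h : ℝ → ℝ, h 0 = h0 →
        (∀ t : ℝ, 0 ≤ t → 0 < h t) →
        (∀ s t : ℝ, 0 ≤ s → 0 ≤ t → |h t - h s| ≤ 2 * Real.sqrt (g * h0) * |t - s|) →
        (∀ t : ℝ, 0 ≤ t → (∀ s ∈ Set.Icc (0 : ℝ) t, h s ≤ 1) →
          deriv h t ≤ -(g * t) / 2 + Csharp * g * h0 +
            (Cstar / m) * ∫ s in (0 : ℝ)..t, |Real.log (h s)|) →
        ∀ tseq : ℕ → ℝ,
          tseq 0 = (1 / 4) * Real.sqrt (h0 / g) →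
          (∀ n, tseq (n + 1) = tseq n + σ * h (tseq n) / (2 * Real.sqrt (g * h0))) →
          ∀ n : ℕ,
            (1 - σ) ^ n * h0 / 2 ≤ h (tseq n) ∧
            h (tseq n) ≤ (1 - σ ^ 2 / 32) ^ n * (3 / 2) * h0 := by
  obtain ⟨hσ0, hσhalf⟩ := hσ
  have h1σ : 0 < 1 - σ := by linarith
  have hgh0 : 0 < g * h0 := mul_pos hg hh0
  have hs : 0 < Real.sqrt (g * h0) := Real.sqrt_pos.mpr hgh0
  have hs2 : Real.sqrt (g * h0) ^ 2 = g * h0 := Real.sq_sqrt hgh0.le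
  set L : ℝ := 2 * Real.sqrt (g * h0) with hLdef
  have hLpos : 0 < L := by positivity
  set q : ℝ := 1 - σ ^ 2 / 32 with hqdef
  have hσσ4 : σ * σ < 1 / 2 * (1 / 2) := by
    have := mul_lt_mul'' hσhalf hσhalf hσ0.le hσ0.le
    linarith only [this]
  have hq0 : 0 < q := by rw [hqdef]; linarith only [hσσ4]
  have hq1 : q < 1 := by rw [hqdef]; linarith only [pow_pos hσ0 2]
  set A : ℝ := -Real.log (1 - σ) with hAdef
  have hApos : 0 < A := by
    have := Real.log_neg h1σ (by linarith)
    rw [hAdef]; linarith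
  -- smallness consequences
  have hsmall1 : h0 < 2 / (3 * (1 + σ)) := lt_of_lt_of_le hsmall (min_le_left _ _)
  have hsmall2 : h0 < 1 / ((32 * Csharp) ^ 2 * g) := lt_of_lt_of_le hsmall (min_le_right _ _)
  have h1σ3 : (1 + σ) * (3 / 2) * h0 < 1 := by
    have hc : (0:ℝ) < 3 * (1 + σ) := by linarith
    have h2c := (lt_div_iff₀ hc).mp hsmall1
    linarith only [h2c]
  have hh0lt1 : (3 / 2) * h0 < 1 := by
    have hσh0 : 0 ≤ σ * h0 := by positivity
    linarith only [h1σ3, hσh0]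
  have hB0 : h0 / 2 < 1 := by linarith only [hh0lt1, hh0]
  set B : ℝ := -Real.log (h0 / 2) with hBdef
  have hBpos : 0 < B := by
    have := Real.log_neg (by positivity) hB0
    rw [hBdef]; linarith
  have hCs : Csharp * g * h0 ≤ L / 64 := by
    have h1 : (32 * Csharp) ^ 2 * g * h0 < 1 := by
      have hc : (0:ℝ) < (32 * Csharp) ^ 2 * g := by positivity
      have := (lt_div_iff₀ hc).mp hsmall2
      linarith
    have h2 : (32 * Csharp * Real.sqrt (g * h0)) ^ 2 < 1 ^ 2 := by
      have he : (32 * Csharp * Real.sqrt (g * h0)) ^ 2 =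
          (32 * Csharp) ^ 2 * Real.sqrt (g * h0) ^ 2 := by ring
      rw [he, hs2]
      linarith only [h1]
    have h3 : 32 * Csharp * Real.sqrt (g * h0) < 1 :=
      lt_of_pow_lt_pow_left₀ 2 (by norm_num) h2
    have h4 := mul_lt_mul_of_pos_right h3 hs
    have hss : Real.sqrt (g * h0) * Real.sqrt (g * h0) = g * h0 := Real.mul_self_sqrt hgh0.le
    have h5 : 32 * Csharp * (g * h0) < Real.sqrt (g * h0) := by
      have heq : 32 * Csharp * (g * h0) =
          32 * Csharp * Real.sqrt (g * h0) * Real.sqrt (g * h0) := by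
        linear_combination (32 * Csharp) * hss.symm
      rw [heq]; linarith [h4]
    rw [hLdef]
    linarith [h5]
  -- the geometric-log series
  have hqabs : ‖q‖ < 1 := by
    rw [Real.norm_eq_abs, abs_lt]; constructor <;> linarith only [hq0, hq1]
  have hsumgeo : Summable (fun k : ℕ => q ^ k) := summable_geometric_of_norm_lt_one hqabs
  have hsum1 : Summable (fun k : ℕ => ((k : ℝ) + 1) * q ^ k) := by
    have h1 : Summable (fun k : ℕ => (k : ℝ) * q ^ k) := by
      simpa using summable_pow_mul_geometric_of_norm_lt_one 1 hqabs
    refine (h1.add hsumgeo).congr fun k => ?_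
    ring
  have hsumT : Summable (fun k : ℕ => (((k : ℝ) + 1) * A + B) * q ^ k) := by
    refine ((hsum1.mul_left A).add (hsumgeo.mul_left B)).congr fun k => ?_
    ring
  set T : ℝ := ∑' k : ℕ, (((k : ℝ) + 1) * A + B) * q ^ k with hTdef
  have hT0 : 0 ≤ T := tsum_nonneg fun k => by positivity
  have hpartial : ∀ n : ℕ,
      (∑ k ∈ Finset.range n, (((k : ℝ) + 1) * A + B) * q ^ k) ≤ T := by
    intro n
    exact Summable.sum_le_tsum (Finset.range n) (fun i _ => by positivity) hsumT
  set t0v : ℝ := 1 / 4 * Real.sqrt (h0 / g) with ht0vdef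
  have ht0vpos : 0 < t0v := by
    rw [ht0vdef]
    have : 0 < Real.sqrt (h0 / g) := Real.sqrt_pos.mpr (by positivity)
    linarith
  have hsqmul : Real.sqrt (g * h0) * Real.sqrt (h0 / g) = h0 := by
    rw [← Real.sqrt_mul hgh0.le]
    rw [show g * h0 * (h0 / g) = h0 ^ 2 by field_simp]
    exact Real.sqrt_sq hh0.le
  have hLt0 : L * t0v = h0 / 2 := by
    rw [hLdef, ht0vdef]
    linear_combination (1 / 2) * hsqmul
  have hgt0v : g * t0v = Real.sqrt (g * h0) / 4 := by
    have hg2 : g * Real.sqrt (h0 / g) = Real.sqrt (g * h0) := by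
      rw [show g * h0 = g ^ 2 * (h0 / g) by field_simp, Real.sqrt_mul (sq_nonneg g),
        Real.sqrt_sq hg.le]
    rw [ht0vdef]
    linear_combination (1 / 4) * hg2
  set K : ℝ := B * t0v + 3 * σ * h0 / (2 * L) * T with hKdef
  have hKpos : 0 < K := by
    have h2' : 0 ≤ 3 * σ * h0 / (2 * L) * T := by positivity
    rw [hKdef]
    exact add_pos_of_pos_of_nonneg (mul_pos hBpos ht0vpos) h2'
  refine ⟨32 * Cstar * K / L, ?_⟩
  intro m hMm _hm2 h hh00 hpos hlip hderiv tseq htseq0 htseqS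
  have hmpos : 0 < m := lt_of_lt_of_le (by positivity) hMm
  have hKm : Cstar / m * K ≤ L / 32 := by
    rw [div_mul_eq_mul_div, div_le_div_iff₀ hmpos (by norm_num : (0:ℝ) < 32)]
    have h32 := (div_le_iff₀ hLpos).mp hMm
    linarith only [h32]
  -- continuity of h on [0, ∞)
  have hcont : ContinuousOn h (Set.Ici 0) := by
    have hlip' : LipschitzOnWith (Real.toNNReal L) h (Set.Ici 0) := by
      refine LipschitzOnWith.of_dist_le_mul fun x hx y hy => ?_
      rw [Real.dist_eq, Real.dist_eq, Real.coe_toNNReal _ hLpos.le]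
      exact hlip y x hy hx
    exact hlip'.continuousOn
  have hint : ∀ a b : ℝ, 0 ≤ a → 0 ≤ b →
      IntervalIntegrable (fun s => |Real.log (h s)|) MeasureTheory.volume a b := by
    intro a b ha hb
    apply ContinuousOn.intervalIntegrable
    have hsub : Set.uIcc a b ⊆ Set.Ici 0 := by
      intro x hx
      rcases Set.mem_uIcc.mp hx with ⟨h1, _⟩ | ⟨h1, _⟩ <;>
        · simp only [Set.mem_Ici]; linarith
    exact ((hcont.mono hsub).log fun x hx => (hpos x (hsub hx)).ne').abs
  -- the strengthened induction
  have key : ∀ n : ℕ,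
      ((1 - σ) ^ n * h0 / 2 ≤ h (tseq n) ∧ h (tseq n) ≤ q ^ n * (3 / 2) * h0) ∧
      t0v ≤ tseq n ∧
      (∀ s ∈ Set.Icc (0 : ℝ) (tseq n), h s ≤ 1) ∧
      (∫ s in (0 : ℝ)..(tseq n), |Real.log (h s)|) ≤
        B * t0v + 3 * σ * h0 / (2 * L) *
          ∑ k ∈ Finset.range n, (((k : ℝ) + 1) * A + B) * q ^ k := by
    intro n
    induction n with
    | zero =>
      have hseg : ∀ s ∈ Set.Icc (0 : ℝ) (tseq 0), h0 / 2 ≤ h s ∧ h s ≤ 3 / 2 * h0 := by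
        intro s hs
        have h1 : |h s - h 0| ≤ L * |s - 0| := hlip 0 s le_rfl hs.1
        rw [hh00] at h1
        have h2 : |s - 0| ≤ t0v := by
          rw [abs_of_nonneg (by linarith only [hs.1])]
          simpa [htseq0, ht0vdef] using hs.2
        have h3 : |h s - h0| ≤ h0 / 2 := by
          calc |h s - h0| ≤ L * |s - 0| := h1
            _ ≤ L * t0v := mul_le_mul_of_nonneg_left h2 hLpos.le
            _ = h0 / 2 := hLt0
        have h4 := abs_le.mp h3
        constructor <;> [linarith only [h4.1]; linarith only [h4.2]]
      have hb1 : h0 / 2 ≤ h (tseq 0) :=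
        (hseg (tseq 0) ⟨by rw [htseq0]; exact ht0vpos.le, le_rfl⟩).1
      have hb2 : h (tseq 0) ≤ 3 / 2 * h0 :=
        (hseg (tseq 0) ⟨by rw [htseq0]; exact ht0vpos.le, le_rfl⟩).2
      refine ⟨⟨by simpa using hb1, by simpa using hb2⟩, by rw [htseq0], ?_, ?_⟩
      · intro s hs
        have := (hseg s hs).2
        linarith only [this, hh0lt1]
      · have hbd : ∀ s ∈ Set.Icc (0 : ℝ) (tseq 0), |Real.log (h s)| ≤ B := by
          intro s hs
          obtain ⟨hl, hu⟩ := hseg s hs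
          have hpos' : 0 < h s := hpos s hs.1
          rw [abs_of_nonpos (Real.log_nonpos hpos'.le (by linarith only [hu, hh0lt1]))]
          have := Real.log_le_log (by positivity : (0:ℝ) < h0 / 2) hl
          rw [hBdef]; linarith only [this]
        have h0le : (0:ℝ) ≤ tseq 0 := by rw [htseq0]; exact ht0vpos.le
        calc (∫ s in (0:ℝ)..(tseq 0), |Real.log (h s)|)
            ≤ ∫ _ in (0:ℝ)..(tseq 0), B := by
              apply intervalIntegral.integral_mono_on h0le (hint 0 _ le_rfl h0le)
                intervalIntegrable_const hbd
          _ = (tseq 0 - 0) * B := by rw [intervalIntegral.integral_const, smul_eq_mul]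
          _ = B * t0v := by rw [htseq0]; ring
          _ ≤ B * t0v + 3 * σ * h0 / (2 * L) *
              ∑ k ∈ Finset.range 0, (((k : ℝ) + 1) * A + B) * q ^ k := by
              simp
    | succ n ih =>
      obtain ⟨⟨hlb, hub⟩, ht0n, hle1, hintn⟩ := ih
      have htn0 : (0:ℝ) ≤ tseq n := le_trans ht0vpos.le ht0n
      have hpn : 0 < h (tseq n) := hpos _ htn0
      have hqn1 : q ^ n ≤ 1 := pow_le_one₀ hq0.le hq1.le
      have hstep : tseq (n + 1) = tseq n + σ * h (tseq n) / L := htseqS n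
      have hΔpos : 0 < σ * h (tseq n) / L := by positivity
      have htmono : tseq n < tseq (n + 1) := by rw [hstep]; linarith only [hΔpos]
      have htn10 : (0:ℝ) ≤ tseq (n + 1) := by linarith only [htmono, htn0]
      have hLΔ : L * (tseq (n + 1) - tseq n) = σ * h (tseq n) := by
        rw [hstep]
        field_simp
        ring
      -- pointwise bounds on the new segment
      have hseg : ∀ s ∈ Set.Icc (tseq n) (tseq (n + 1)),
          (1 - σ) * h (tseq n) ≤ h s ∧ h s ≤ (1 + σ) * h (tseq n) := by
        intro s hs
        have h1 : |h s - h (tseq n)| ≤ L * |s - tseq n| :=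
          hlip (tseq n) s htn0 (by linarith only [hs.1, htn0])
        have h2 : |h s - h (tseq n)| ≤ σ * h (tseq n) := by
          calc |h s - h (tseq n)| ≤ L * |s - tseq n| := h1
            _ ≤ L * (tseq (n + 1) - tseq n) := by
                rw [abs_of_nonneg (by linarith only [hs.1])]
                exact mul_le_mul_of_nonneg_left (by linarith only [hs.2]) hLpos.le
            _ = σ * h (tseq n) := hLΔ
        have h3 := abs_le.mp h2
        constructor <;> [linarith only [h3.1]; linarith only [h3.2]]
      have hle1' : ∀ s ∈ Set.Icc (0 : ℝ) (tseq (n + 1)), h s ≤ 1 := by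
        intro s hs
        rcases le_or_gt s (tseq n) with hc | hc
        · exact hle1 s ⟨hs.1, hc⟩
        · have e1 := (hseg s ⟨hc.le, hs.2⟩).2
          have e2 : (1 + σ) * h (tseq n) ≤ (1 + σ) * (q ^ n * (3 / 2) * h0) :=
            mul_le_mul_of_nonneg_left hub (by linarith only [hσ0])
          have e3 : q ^ n * (3 / 2) * h0 ≤ 1 * (3 / 2 * h0) := by
            rw [show q ^ n * (3 / 2) * h0 = q ^ n * (3 / 2 * h0) by ring]
            exact mul_le_mul_of_nonneg_right hqn1 (by linarith only [hh0])
          have e4 : (1 + σ) * (q ^ n * (3 / 2) * h0) ≤ (1 + σ) * (1 * (3 / 2 * h0)) :=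
            mul_le_mul_of_nonneg_left e3 (by linarith only [hσ0])
          have e5 : (1 + σ) * (1 * (3 / 2 * h0)) < 1 := by
            rw [one_mul]
            calc (1 + σ) * (3 / 2 * h0) = (1 + σ) * (3 / 2) * h0 := by ring
              _ < 1 := h1σ3
          linarith only [e1, e2, e4, e5]
      -- lower bound on segment against the geometric floor
      have hsegfloor : ∀ s ∈ Set.Icc (tseq n) (tseq (n + 1)),
          (1 - σ) ^ (n + 1) * h0 / 2 ≤ h s := by
        intro s hs
        have h1 := (hseg s hs).1
        have h2 : (1 - σ) * ((1 - σ) ^ n * h0 / 2) ≤ (1 - σ) * h (tseq n) :=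
          mul_le_mul_of_nonneg_left hlb h1σ.le
        calc (1 - σ) ^ (n + 1) * h0 / 2 = (1 - σ) * ((1 - σ) ^ n * h0 / 2) := by ring
          _ ≤ (1 - σ) * h (tseq n) := h2
          _ ≤ h s := h1
      -- integral bound over the new segment
      have hlogbd : ∀ s ∈ Set.Icc (tseq n) (tseq (n + 1)),
          |Real.log (h s)| ≤ ((n : ℝ) + 1) * A + B := by
        intro s hs
        have hfloor := hsegfloor s hs
        have hps : 0 < h s := hpos s (by linarith only [hs.1, htn0])
        have hup : h s ≤ 1 := hle1' s ⟨by linarith only [hs.1, htn0], hs.2⟩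
        rw [abs_of_nonpos (Real.log_nonpos hps.le hup)]
        have hflpos : 0 < (1 - σ) ^ (n + 1) * (h0 / 2) := by positivity
        have h1 : Real.log ((1 - σ) ^ (n + 1) * (h0 / 2)) ≤ Real.log (h s) :=
          Real.log_le_log hflpos (by linarith only [hfloor])
        have h2 : Real.log ((1 - σ) ^ (n + 1) * (h0 / 2)) =
            ((n : ℝ) + 1) * Real.log (1 - σ) + Real.log (h0 / 2) := by
          rw [Real.log_mul (by positivity) (by positivity), Real.log_pow]
          push_cast
          ring
        rw [hAdef, hBdef]
        rw [h2] at h1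
        linarith only [h1]
      have hsegint : (∫ s in (tseq n)..(tseq (n + 1)), |Real.log (h s)|) ≤
          3 * σ * h0 / (2 * L) * ((((n : ℝ) + 1) * A + B) * q ^ n) := by
        calc (∫ s in (tseq n)..(tseq (n + 1)), |Real.log (h s)|)
            ≤ ∫ _ in (tseq n)..(tseq (n + 1)), (((n : ℝ) + 1) * A + B) := by
              apply intervalIntegral.integral_mono_on htmono.le
                (hint _ _ htn0 htn10) intervalIntegrable_const hlogbd
          _ = (tseq (n + 1) - tseq n) * (((n : ℝ) + 1) * A + B) := by
              rw [intervalIntegral.integral_const, smul_eq_mul]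
          _ ≤ 3 * σ * h0 / (2 * L) * ((((n : ℝ) + 1) * A + B) * q ^ n) := by
              have hd : tseq (n + 1) - tseq n = σ * h (tseq n) / L := by rw [hstep]; ring
              have hcoef : (0:ℝ) ≤ ((n : ℝ) + 1) * A + B := by positivity
              rw [hd]
              have hnum : σ * h (tseq n) * (((n : ℝ) + 1) * A + B) ≤
                  σ * (q ^ n * (3 / 2) * h0) * (((n : ℝ) + 1) * A + B) :=
                mul_le_mul_of_nonneg_right
                  (mul_le_mul_of_nonneg_left hub hσ0.le) hcoef
              have heq1 : σ * h (tseq n) / L * (((n : ℝ) + 1) * A + B) =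
                  σ * h (tseq n) * (((n : ℝ) + 1) * A + B) / L := by ring
              have heq2 : 3 * σ * h0 / (2 * L) * ((((n : ℝ) + 1) * A + B) * q ^ n) =
                  σ * (q ^ n * (3 / 2) * h0) * (((n : ℝ) + 1) * A + B) / L := by
                field_simp
              rw [heq1, heq2]
              exact (div_le_div_iff_of_pos_right hLpos).mpr hnum
      have hintn1 : (∫ s in (0 : ℝ)..(tseq (n + 1)), |Real.log (h s)|) ≤
          B * t0v + 3 * σ * h0 / (2 * L) *
            ∑ k ∈ Finset.range (n + 1), (((k : ℝ) + 1) * A + B) * q ^ k := by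
        have hsplit := intervalIntegral.integral_add_adjacent_intervals
          (hint 0 (tseq n) le_rfl htn0) (hint (tseq n) (tseq (n + 1)) htn0 htn10)
        rw [← hsplit, Finset.sum_range_succ, mul_add]
        linarith only [hintn, hsegint]
      -- bound the whole integral by K
      have hintK : ∀ t : ℝ, 0 ≤ t → t ≤ tseq (n + 1) →
          (∫ s in (0 : ℝ)..t, |Real.log (h s)|) ≤ K := by
        intro t ht0 htn1
        have hsplit := intervalIntegral.integral_add_adjacent_intervals
          (hint 0 t le_rfl ht0) (hint t (tseq (n + 1)) ht0 htn10)
        have htail : (0:ℝ) ≤ ∫ s in t..(tseq (n + 1)), |Real.log (h s)| :=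
          intervalIntegral.integral_nonneg htn1 fun u _ => abs_nonneg _
        have h1 : (∫ s in (0 : ℝ)..t, |Real.log (h s)|) ≤
            ∫ s in (0 : ℝ)..(tseq (n + 1)), |Real.log (h s)| := by
          linarith only [hsplit, htail]
        have h2 : 3 * σ * h0 / (2 * L) *
            (∑ k ∈ Finset.range (n + 1), (((k : ℝ) + 1) * A + B) * q ^ k) ≤
            3 * σ * h0 / (2 * L) * T :=
          mul_le_mul_of_nonneg_left (hpartial (n + 1)) (by positivity)
        rw [hKdef]
        linarith only [h1, h2, hintn1]
      -- derivative bound on the segment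
      have hEb : ∀ t ∈ Set.Icc (tseq n) (tseq (n + 1)), deriv h t ≤ -(L / 64) := by
        intro t ht
        have ht0' : (0:ℝ) ≤ t := by linarith only [ht.1, htn0]
        have hd := hderiv t ht0' fun s hs => hle1' s ⟨hs.1, by linarith only [hs.2, ht.2]⟩
        have hterm1 : -(g * t) / 2 ≤ -(L / 16) := by
          have hgt : g * t0v ≤ g * t :=
            mul_le_mul_of_nonneg_left (le_trans ht0n ht.1) hg.le
          rw [hLdef]
          linarith only [hgt, hgt0v]
        have hterm3 : Cstar / m * (∫ s in (0 : ℝ)..t, |Real.log (h s)|) ≤ L / 32 := by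
          have h1 := hintK t ht0' ht.2
          have h2 : Cstar / m * (∫ s in (0 : ℝ)..t, |Real.log (h s)|) ≤ Cstar / m * K :=
            mul_le_mul_of_nonneg_left h1 (div_nonneg hCstar.le hmpos.le)
          linarith only [h2, hKm]
        calc deriv h t ≤ -(g * t) / 2 + Csharp * g * h0 +
              Cstar / m * ∫ s in (0 : ℝ)..t, |Real.log (h s)| := hd
          _ ≤ -(L / 16) + L / 64 + L / 32 := by linarith only [hterm1, hCs, hterm3]
          _ = -(L / 64) := by ring
      have hdiffAt : ∀ t ∈ Set.Icc (tseq n) (tseq (n + 1)), DifferentiableAt ℝ h t := by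
        intro t ht
        by_contra hnd
        have h1 := deriv_zero_of_not_differentiableAt hnd
        have h2 := hEb t ht
        rw [h1] at h2
        linarith only [h2, hLpos]
      -- monotonicity argument
      have hanti : AntitoneOn (fun t => h t + L / 64 * t) (Set.Icc (tseq n) (tseq (n + 1))) := by
        apply antitoneOn_of_deriv_nonpos (convex_Icc _ _)
        · refine ContinuousOn.add (hcont.mono ?_) (by fun_prop)
          intro x hx
          exact le_trans htn0 hx.1
        · rw [interior_Icc]
          intro x hx
          exact ((hdiffAt x (Set.Ioo_subset_Icc_self hx)).add
            (by fun_prop)).differentiableWithinAt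
        · rw [interior_Icc]
          intro x hx
          have hdx := hdiffAt x (Set.Ioo_subset_Icc_self hx)
          have hmul : HasDerivAt (fun t : ℝ => L / 64 * t) (L / 64) x := by
            simpa using (hasDerivAt_id x).const_mul (L / 64)
          have : deriv (fun t => h t + L / 64 * t) x = deriv h x + L / 64 := by
            rw [deriv_fun_add hdx hmul.differentiableAt, hmul.deriv]
          rw [this]
          have hEx := hEb x (Set.Ioo_subset_Icc_self hx)
          linarith only [hEx]
      have hdec : h (tseq (n + 1)) ≤ h (tseq n) - σ * h (tseq n) / 64 := by
        have := hanti (Set.left_mem_Icc.mpr htmono.le) (Set.right_mem_Icc.mpr htmono.le) htmono.le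
        simp only at this
        have hq' : L / 64 * (tseq (n + 1) - tseq n) = σ * h (tseq n) / 64 := by
          linarith only [hLΔ]
        linarith only [this, hq']
      refine ⟨⟨?_, ?_⟩, by linarith only [ht0n, htmono], hle1', hintn1⟩
      · have := hsegfloor (tseq (n + 1)) ⟨htmono.le, le_rfl⟩
        linarith only [this]
      · have h1 : h (tseq (n + 1)) ≤ (1 - σ / 64) * h (tseq n) := by
          linarith only [hdec]
        have h2 : (1 - σ / 64) * h (tseq n) ≤ q * (q ^ n * (3 / 2) * h0) := by
          apply mul_le_mul _ hub hpn.le hq0.le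
          rw [hqdef]
          have hσσ : σ * σ ≤ σ * (1 / 2) := mul_le_mul_of_nonneg_left hσhalf.le hσ0.le
          linarith only [hσσ, hσ0]
        calc h (tseq (n + 1)) ≤ q * (q ^ n * (3 / 2) * h0) := le_trans h1 h2
          _ = q ^ (n + 1) * (3 / 2) * h0 := by ring
  intro n
  exact ⟨(key n).1.1, (key n).1.2⟩
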